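/- Chen's identity at level two: for a C¹ path x : [a,c] → ℝ^d and a < b < c, the second-level signature over [a,c] satisfies S^{(i,j)}_{[a,c]} = S^{(i,j)}_{[a,b]} + S^{(i,j)}_{[b,c]} + S^{(i)}_{[a,b]} · S^{(j)}_{[b,c]}. -/

import Mathlib

/-!
With `F(t) = ∫_a^t f`, the inner integral factors and `∫_a^c ∫_a^t f(s) g(t) ds dt = ∫_a^c F g`.
Split this at `b`; on `[b, c]` write `F(t) = F(b) + ∫_b^t f`, which turns the part over `[b, c]`
into the double integral over `[b, c]` plus the product term `F(b) ∫_b^c g`.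
-/

open Set intervalIntegral
open scoped Interval

variable {𝕜 : Type*} [RCLike 𝕜] {f g : ℝ → 𝕜} {a b c : ℝ}

theorem intervalIntegrable_primitive_mul (hf : ContinuousOn f [[a, c]])
    (hg : ContinuousOn g [[a, c]]) :
    IntervalIntegrable (fun t => (∫ s in a..t, f s) * g t) MeasureTheory.volume a c :=
  ((continuousOn_primitive_interval' hf.intervalIntegrable left_mem_uIcc).mul hg).intervalIntegrable

theorem integral_integral_mul_eq_add_adjacent (hf : ContinuousOn f [[a, c]])
    (hg : ContinuousOn g [[a, c]]) (hb : b ∈ [[a, c]]) :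
    (∫ t in a..c, ∫ s in a..t, f s * g t) =
      (∫ t in a..b, ∫ s in a..t, f s * g t) + (∫ t in b..c, ∫ s in b..t, f s * g t) +
        (∫ t in a..b, f t) * ∫ t in b..c, g t := by
  have hab : [[a, b]] ⊆ [[a, c]] := uIcc_subset_uIcc_left hb
  have hbc : [[b, c]] ⊆ [[a, c]] := uIcc_subset_uIcc_right hb
  have hprimitive : ∀ t ∈ [[b, c]],
      (∫ s in a..t, f s) * g t = (∫ s in a..b, f s) * g t + (∫ s in b..t, f s) * g t := by
    intro t ht
    rw [← add_mul, integral_add_adjacent_intervals (hf.mono hab).intervalIntegrable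
      (hf.mono (uIcc_subset_uIcc (hbc left_mem_uIcc) (hbc ht))).intervalIntegrable]
  have hF := intervalIntegrable_primitive_mul hf hg
  simp only [integral_mul_const]
  rw [← integral_add_adjacent_intervals (hF.mono_set hab) (hF.mono_set hbc),
    integral_congr hprimitive, integral_add ((hg.mono hbc).intervalIntegrable.const_mul _)
      (intervalIntegrable_primitive_mul (hf.mono hbc) (hg.mono hbc)), integral_const_mul]
  ring

theorem chen_identity_level_two_general
    {d : ℕ} (a b c : ℝ) (hab : a < b) (hbc : b < c) (x' : ℝ → Fin d → ℝ)
    (hcont : ContinuousOn x' (Set.Icc a c)) (i j : Fin d) :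
    (∫ t2 in a..c, ∫ t1 in a..t2, x' t1 i * x' t2 j) =
      (∫ t2 in a..b, ∫ t1 in a..t2, x' t1 i * x' t2 j) +
      (∫ t2 in b..c, ∫ t1 in b..t2, x' t1 i * x' t2 j) +
      (∫ t in a..b, x' t i) * (∫ t in b..c, x' t j) := by
  have hcont' : ContinuousOn x' [[a, c]] := by rwa [uIcc_of_le (hab.trans hbc).le]
  exact integral_integral_mul_eq_add_adjacent ((continuous_apply i).comp_continuousOn hcont')
    ((continuous_apply j).comp_continuousOn hcont') (mem_uIcc_of_le hab.le hbc.le)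

/-- Chen's identity at level two: for `a < b < c`,
`S^{(i,j)}_{[a,c]} = S^{(i,j)}_{[a,b]} + S^{(i,j)}_{[b,c]} + S^{(i)}_{[a,b]} · S^{(j)}_{[b,c]}`. -/
theorem chen_identity_level_two
    {d : ℕ} (a b c : ℝ) (hab : a < b) (hbc : b < c) (x x' : ℝ → Fin d → ℝ)
    (hderiv : ∀ t ∈ Set.Icc a c, ∀ i, HasDerivAt (fun s => x s i) (x' t i) t)
    (hcont : ContinuousOn x' (Set.Icc a c)) (i j : Fin d) :
    (∫ t2 in a..c, ∫ t1 in a..t2, x' t1 i * x' t2 j) =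
      (∫ t2 in a..b, ∫ t1 in a..t2, x' t1 i * x' t2 j) +
      (∫ t2 in b..c, ∫ t1 in b..t2, x' t1 i * x' t2 j) +
      (∫ t in a..b, x' t i) * (∫ t in b..c, x' t j) :=
  chen_identity_level_two_general a b c hab hbc x' hcont i j
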